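/- If [a + m₁] = [a + m₂] where a ∈ (ℤ/2ⁿℤ)^{2ν+δ} has a unit coordinate among the first 2ν entries and m₁, m₂ ∈ (2ℤ/2ⁿℤ)^{2ν+δ}, then a + m₁ = (1 + μ)(a + m₂) for some μ ∈ 2·(ℤ/2ⁿℤ). -/

import Mathlib

namespace Ortho
open Matrix

abbrev Vec (n ν δ : ℕ) := Fin (2*ν+δ) → ZMod (2^n)

/-- The orthogonal form matrix `G_{2ν+δ,Δ}`. -/
def Gmat (n ν δ : ℕ) (z : ZMod (2^n)) : Matrix (Fin (2*ν+δ)) (Fin (2*ν+δ)) (ZMod (2^n)) :=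
  Matrix.of fun i j =>
    if i.val < ν ∧ j.val = i.val + ν then 1
    else if 2*ν ≤ i.val ∧ i.val = j.val then (if δ = 2 then z else 1)
    else if i.val = 2*ν ∧ j.val = 2*ν+1 then 1
    else 0

/-- Representatives of vertices: vectors with a unit coordinate that are isotropic. -/
abbrev VertexRep (n ν δ : ℕ) (z : ZMod (2^n)) :=
  {a : Vec n ν δ // (∃ i, IsUnit (a i)) ∧ a ⬝ᵥ (Gmat n ν δ z).mulVec a = 0}

instance vsetoid (n ν δ : ℕ) (z : ZMod (2^n)) : Setoid (VertexRep n ν δ z) where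
  r a b := ∃ u : (ZMod (2^n))ˣ, (a : Vec n ν δ) = (u : ZMod (2^n)) • (b : Vec n ν δ)
  iseqv := by
    constructor
    · intro a; exact ⟨1, by simp⟩
    · rintro a b ⟨u, h⟩
      exact ⟨u⁻¹, by rw [h, smul_smul, Units.inv_mul, one_smul]⟩
    · rintro a b c ⟨u, h1⟩ ⟨v, h2⟩
      exact ⟨u * v, by rw [h1, h2, smul_smul, Units.val_mul]⟩

/-- Vertices of the orthogonal graph: classes of vectors under unit scaling. -/
def Vertex (n ν δ : ℕ) (z : ZMod (2^n)) := Quotient (vsetoid n ν δ z)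

def adjAux (n ν δ : ℕ) (z : ZMod (2^n)) (A B : Vertex n ν δ z) : Prop :=
  ∃ a b : VertexRep n ν δ z, (⟦a⟧ : Vertex n ν δ z) = A ∧ (⟦b⟧ : Vertex n ν δ z) = B ∧
    IsUnit ((a : Vec n ν δ) ⬝ᵥ (Gmat n ν δ z + (Gmat n ν δ z)ᵀ).mulVec (b : Vec n ν δ))

/-- The orthogonal graph modulo `2^n`. -/
def OGraph (n ν δ : ℕ) (z : ZMod (2^n)) : SimpleGraph (Vertex n ν δ z) where
  Adj A B := A ≠ B ∧ (adjAux n ν δ z A B ∨ adjAux n ν δ z B A)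
  symm := by constructor; rintro A B ⟨h1, h2⟩; exact ⟨Ne.symm h1, Or.symm h2⟩
  loopless := by constructor; rintro A ⟨h, -⟩; exact h rfl

end Ortho


namespace Ortho
open Matrix

theorem dvd_sub_one_of_add_eq_mul_add {R : Type*} [CommRing R] {d x m₁ m₂ u : R}
    (hx : IsUnit x) (hm₁ : d ∣ m₁) (hm₂ : d ∣ m₂) (h : x + m₁ = u * (x + m₂)) :
    d ∣ u - 1 := by
  have hux : (u - 1) * x = m₁ - u * m₂ := by linear_combination -h
  rw [← hx.dvd_mul_right, hux]
  exact dvd_sub hm₁ (hm₂.mul_left u)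

theorem class_eq_implies_one_add_even (n ν δ : ℕ) (a m₁ m₂ : Vec n ν δ)
    (ha : ∃ j : Fin (2*ν+δ), j.val < 2*ν ∧ IsUnit (a j))
    (hm₁ : ∀ i, ∃ y, m₁ i = 2*y) (hm₂ : ∀ i, ∃ y, m₂ i = 2*y)
    (h : ∃ u : (ZMod (2^n))ˣ, a + m₁ = (u : ZMod (2^n)) • (a + m₂)) :
    ∃ μ : ZMod (2^n), (∃ y, μ = 2*y) ∧ a + m₁ = (1 + μ) • (a + m₂) := by
  obtain ⟨u, hu⟩ := h
  obtain ⟨j, -, haj⟩ := ha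
  refine ⟨u - 1, ?_, by rwa [add_sub_cancel]⟩
  exact dvd_sub_one_of_add_eq_mul_add haj (hm₁ j) (hm₂ j) (by simpa using congrFun hu j)

end Ortho
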